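/- arXiv:2311.18305 — 2 statements merged into one kernel-verified Lean document; each statement's English description precedes it below -/
import Mathlib

section
/- For every x ∈ ℝ^n, letting x* be the unique point with A x* = b and x* ∈ x + R(Aᵀ), either P(x) = x or ‖P(x) − x*‖² < ‖x − x*‖². -/
open scoped RealInnerProductSpace

noncomputable section

abbrev Euc (n : ℕ) := EuclideanSpace ℝ (Fin n)

/-- Intermediate Kaczmarz chain: `chainK Pj x j` is `y_j` with `y_0 = x`, `y_{j+1} = P_{j+1}(y_j)`. -/
def chainK {n p : ℕ} (Pj : Fin p → Euc n → Euc n) (x : Euc n) : ℕ → Euc n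
  | 0 => x
  | j + 1 => if h : j < p then Pj ⟨j, h⟩ (chainK Pj x j) else chainK Pj x j

/-- The block Kaczmarz operator `P = P_p ∘ ⋯ ∘ P_1`. -/
def kacz {n p : ℕ} (Pj : Fin p → Euc n → Euc n) (x : Euc n) : Euc n := chainK Pj x p

/-- `f` sends each point to the (unique) nearest point of `S`. -/
def IsNearestPointMap {n : ℕ} (S : Set (Euc n)) (f : Euc n → Euc n) : Prop :=
  ∀ x, f x ∈ S ∧ ∀ y ∈ S, dist x (f x) ≤ dist x y

/-- The stacked (full) matrix `A` with blocks `A_j`. -/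
def fullA {n p : ℕ} (m : Fin p → ℕ)
    (A : ∀ j : Fin p, Euc n →ₗ[ℝ] Euc (m j)) :
    Euc n →ₗ[ℝ] PiLp 2 (fun j => Euc (m j)) :=
  (WithLp.linearEquiv 2 ℝ (∀ j, Euc (m j))).symm.toLinearMap ∘ₗ LinearMap.pi A

/-- The range of `Aᵀ` for the stacked matrix. -/
def RAT {n p : ℕ} (m : Fin p → ℕ)
    (A : ∀ j : Fin p, Euc n →ₗ[ℝ] Euc (m j)) : Submodule ℝ (Euc n) :=
  LinearMap.range (LinearMap.adjoint (fullA m A))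

/-- Orthogonal projection onto a subspace, as an endomorphism. -/
def projSub {n : ℕ} (K : Submodule ℝ (Euc n)) : Euc n →ₗ[ℝ] Euc n :=
  K.subtype ∘ₗ (K.orthogonalProjection).toLinearMap

/-- `Tchain m A j = Q_j ∘ ⋯ ∘ Q_1`, with `Q_i` the orthogonal projection onto `N(A_i)`. -/
def Tchain {n p : ℕ} (m : Fin p → ℕ)
    (A : ∀ j : Fin p, Euc n →ₗ[ℝ] Euc (m j)) :
    ℕ → (Euc n →ₗ[ℝ] Euc n)
  | 0 => LinearMap.id
  | j + 1 => if h : j < p then projSub (LinearMap.ker (A ⟨j, h⟩)) ∘ₗ Tchain m A j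
             else Tchain m A j

/-- `T = Q_p ∘ ⋯ ∘ Q_1`. -/
def Tmap {n p : ℕ} (m : Fin p → ℕ)
    (A : ∀ j : Fin p, Euc n →ₗ[ℝ] Euc (m j)) : Euc n →ₗ[ℝ] Euc n :=
  Tchain m A p

/-- `C = I - T`. -/
def Cmap {n p : ℕ} (m : Fin p → ℕ)
    (A : ∀ j : Fin p, Euc n →ₗ[ℝ] Euc (m j)) : Euc n →ₗ[ℝ] Euc n :=
  LinearMap.id - Tmap m A

/-- The Krylov space `K_k(C, r) = span(r, Cr, …, C^{k-1} r)`. -/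
def krylov {n : ℕ} (C : Euc n →ₗ[ℝ] Euc n) (r : Euc n) (k : ℕ) : Submodule ℝ (Euc n) :=
  Submodule.span ℝ {v | ∃ i < k, v = (C ^ i) r}

/-- `z` is the unique minimizer of `‖x - xs‖²` over `S`. -/
def IsUniqueMinimizer {n : ℕ} (xs : Euc n) (S : Set (Euc n)) (z : Euc n) : Prop :=
  z ∈ S ∧ ∀ y ∈ S, y ≠ z → ‖z - xs‖ ^ 2 < ‖y - xs‖ ^ 2

/-- The affine Krylov space `x₀ + K_k(C, r)` as a set. -/
def affKrylov {n : ℕ} (x0 : Euc n) (C : Euc n →ₗ[ℝ] Euc n) (r : Euc n) (k : ℕ) :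
    Set (Euc n) :=
  (fun v => x0 + v) '' (krylov C r k : Set (Euc n))

/-!
Each `P_j` is the orthogonal projection onto an affine subspace containing `x*`, so by
Pythagoras `‖P_j y - x*‖² = ‖y - x*‖² - ‖y - P_j y‖²`: every step of the sweep either fixes
its point or strictly decreases the distance to `x*`, and distances never increase.
-/

section NearestPoint

variable {F G : Type*} [NormedAddCommGroup F] [InnerProductSpace ℝ F]
  [AddCommGroup G] [Module ℝ G]

theorem Submodule.inner_eq_zero_of_forall_norm_le_norm_sub (K : Submodule ℝ F) {u : F}
    (hu : ∀ w ∈ K, ‖u‖ ≤ ‖u - w‖) {w : F} (hw : w ∈ K) : ⟪u, w⟫ = 0 := by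
  have hinf : ‖u - 0‖ = ⨅ w : (K : Set F), ‖u - w‖ :=
    le_antisymm (le_ciInf fun w => by simpa using hu w w.2)
      (ciInf_le (f := fun w : (K : Set F) => ‖u - w‖)
        ⟨0, Set.forall_mem_range.2 fun _ => norm_nonneg _⟩ ⟨0, K.zero_mem⟩)
  simpa using (norm_eq_iInf_iff_real_inner_eq_zero K K.zero_mem).1 hinf w hw

/-- Minimality makes `y - v` orthogonal to `ker A`, which contains `v - z`. -/
theorem norm_sub_sq_add_norm_sub_sq_of_isNearest (A : F →ₗ[ℝ] G) {b : G} {y v z : F}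
    (hv : A v = b) (hmin : ∀ w, A w = b → ‖y - v‖ ≤ ‖y - w‖) (hz : A z = b) :
    ‖v - z‖ ^ 2 + ‖y - v‖ ^ 2 = ‖y - z‖ ^ 2 := by
  have horth : ⟪y - v, v - z⟫ = 0 := by
    refine (LinearMap.ker A).inner_eq_zero_of_forall_norm_le_norm_sub (fun w hw => ?_) ?_
    · have hvw : A (v + w) = b := by rw [map_add, hv, LinearMap.mem_ker.1 hw, add_zero]
      simpa [sub_add_eq_sub_sub] using hmin (v + w) hvw
    · simp [LinearMap.mem_ker, hv, hz]
  have := norm_add_sq_eq_norm_sq_add_norm_sq_real horth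
  rw [sub_add_sub_cancel] at this
  rw [sq, sq, sq, this]
  ring

end NearestPoint

theorem IsNearestPointMap.eq_or_norm_sub_sq_lt {n m : ℕ} {A : Euc n →ₗ[ℝ] Euc m} {b : Euc m}
    {f : Euc n → Euc n} (hf : IsNearestPointMap {z | A z = b} f) {xs : Euc n} (hxs : A xs = b)
    (y : Euc n) : f y = y ∨ ‖f y - xs‖ ^ 2 < ‖y - xs‖ ^ 2 := by
  have hpyth := norm_sub_sq_add_norm_sub_sq_of_isNearest A (hf y).1
    (fun w hw => by simpa only [dist_eq_norm] using (hf y).2 w hw) hxs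
  refine (eq_or_ne (f y) y).imp id fun hne => ?_
  have : 0 < ‖y - f y‖ ^ 2 := by
    have := sub_ne_zero.2 hne.symm
    positivity
  linarith

theorem chainK_eq_or_norm_sub_sq_lt {n p : ℕ} {Pj : Fin p → Euc n → Euc n} {xs : Euc n}
    (hPj : ∀ j y, Pj j y = y ∨ ‖Pj j y - xs‖ ^ 2 < ‖y - xs‖ ^ 2) (x : Euc n) :
    ∀ k, chainK Pj x k = x ∨ ‖chainK Pj x k - xs‖ ^ 2 < ‖x - xs‖ ^ 2
  | 0 => .inl rfl
  | k + 1 => by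
    have ih := chainK_eq_or_norm_sub_sq_lt hPj x k
    rw [chainK]
    split_ifs with hk
    · rcases hPj ⟨k, hk⟩ (chainK Pj x k) with hfix | hlt
      · rwa [hfix]
      · right
        rcases ih with heq | hlt'
        · simpa only [heq] using hlt
        · exact hlt.trans hlt'
    · exact ih

theorem stmt3_general
    {n p : ℕ} (msz : Fin p → ℕ)
    (A : ∀ j : Fin p, Euc n →ₗ[ℝ] Euc (msz j))
    (b : ∀ j : Fin p, Euc (msz j))
    (Pj : Fin p → Euc n → Euc n)
    (hPj : ∀ j : Fin p, IsNearestPointMap {z : Euc n | A j z = b j} (Pj j))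
    (x xs : Euc n) (hxs : ∀ j, A j xs = b j) :
    kacz Pj x = x ∨ ‖kacz Pj x - xs‖ ^ 2 < ‖x - xs‖ ^ 2 :=
  chainK_eq_or_norm_sub_sq_lt (fun j => (hPj j).eq_or_norm_sub_sq_lt (hxs j)) x p

theorem stmt3
    {n p : ℕ} (msz : Fin p → ℕ)
    (A : ∀ j : Fin p, Euc n →ₗ[ℝ] Euc (msz j))
    (b : ∀ j : Fin p, Euc (msz j))
    (hcons : ∃ z : Euc n, ∀ j, A j z = b j)
    (Pj : Fin p → Euc n → Euc n)
    (hPj : ∀ j : Fin p, IsNearestPointMap {z : Euc n | A j z = b j} (Pj j))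
    (x xs : Euc n) (hxs : ∀ j, A j xs = b j) (hxs' : xs - x ∈ RAT msz A) :
    kacz Pj x = x ∨ ‖kacz Pj x - xs‖ ^ 2 < ‖x - xs‖ ^ 2 :=
  stmt3_general msz A b Pj hPj x xs hxs

end
end

section
/- Let x_0 ∈ ℝ^n, let x* be the unique point with A x* = b and x* ∈ x_0 + R(Aᵀ), and suppose x_1,…,x_K ∈ ℝ^n are generated recursively so that for each k < K one has P(x_k) ≠ x_k and x_{k+1} is the unique minimizer of ‖x − x*‖² over the affine hull aff(x_0,…,x_k,P(x_k)). Then for every k ∈ {0,…,K}: (a) x_k is the unique minimizer of ‖x − x*‖² over aff(x_0,…,x_k); (b) the affine hull aff(x_0,…,x_k) has dimension k; and (c) aff(x_0,…,x_k) = x_0 + K_k(C,r_0), where r_0 := g − C x_0. -/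
open scoped RealInnerProductSpace

noncomputable section

/-!
Every `P_j` is `x ↦ xs + Q_j (x - xs)` for any solution `xs`, so `P x - xs = T (x - xs)` with `T`
a product of orthogonal projections: `P` never moves a point away from `xs`, and
`P x - x0 = (x - x0) - C (x - x0) + r` maps `x0 + K_k` into `x0 + K_{k+1}`. By induction, the new
iterate `x_{k+1}` lies in `x0 + K_{k+1}` but not in `aff(x_0, …, x_k)`: there the unique minimizer
is `x_k`, which `P x_k` would beat. So the hull gains a dimension and, as `dim K_{k+1} ≤ k + 1`,
it fills `x0 + K_{k+1}`.
-/

open Module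

theorem projSub_apply {n : ℕ} (K : Submodule ℝ (Euc n)) (v : Euc n) :
    projSub K v = K.starProjection v :=
  rfl

/-- The nearest point of `x` in `{z | A z = b}` is `w = z0 + Q (x - z0)`: Pythagoras gives
`‖x - y‖² = ‖x - w‖² + ‖w - y‖²` for every solution `y`, so any nearest point equals `w`. -/
theorem IsNearestPointMap.eq_add_projSub {n m : ℕ} {A : Euc n →ₗ[ℝ] Euc m} {b : Euc m}
    {f : Euc n → Euc n} (hf : IsNearestPointMap {z | A z = b} f) {z0 : Euc n} (hz0 : A z0 = b)
    (x : Euc n) : f x = z0 + projSub (LinearMap.ker A) (x - z0) := by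
  obtain ⟨w, hw⟩ : ∃ w, w = z0 + (LinearMap.ker A).starProjection (x - z0) := ⟨_, rfl⟩
  have hAw : A w = b := by
    have h : A ((LinearMap.ker A).starProjection (x - z0)) = 0 :=
      (LinearMap.ker A).starProjection_apply_mem _
    rw [hw, map_add, hz0, h, add_zero]
  have hpyth : ∀ y, A y = b → ‖x - y‖ ^ 2 = ‖x - w‖ ^ 2 + ‖w - y‖ ^ 2 := by
    intro y hy
    have hwy : w - y ∈ LinearMap.ker A := by rw [LinearMap.mem_ker, map_sub, hAw, hy, sub_self]
    have hxw : x - w ∈ (LinearMap.ker A)ᗮ := by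
      rw [hw, sub_add_eq_sub_sub]
      exact (LinearMap.ker A).sub_starProjection_mem_orthogonal _
    rw [← sub_add_sub_cancel x w y, sq, sq, sq, norm_add_sq_eq_norm_sq_add_norm_sq_real
        (Submodule.inner_left_of_mem_orthogonal hwy hxw)]
  obtain ⟨hfx, hfmin⟩ := hf x
  have hle : ‖x - f x‖ ≤ ‖x - w‖ := by simpa only [dist_eq_norm] using hfmin w hAw
  have hsq : ‖w - f x‖ ^ 2 ≤ 0 := by
    nlinarith [hpyth (f x) hfx, norm_nonneg (x - f x)]
  have hzero : ‖w - f x‖ = 0 := pow_eq_zero_iff two_ne_zero |>.1 (le_antisymm hsq (sq_nonneg _))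
  rw [projSub_apply, ← hw]
  exact (sub_eq_zero.1 (norm_eq_zero.1 hzero)).symm

section Kaczmarz

variable {n p : ℕ} {msz : Fin p → ℕ} {A : ∀ j : Fin p, Euc n →ₗ[ℝ] Euc (msz j)}
  {b : ∀ j : Fin p, Euc (msz j)} {Pj : Fin p → Euc n → Euc n} {xs : Euc n}

theorem chainK_sub_eq_Tchain (hPj : ∀ j, IsNearestPointMap {z : Euc n | A j z = b j} (Pj j))
    (hxs : ∀ j, A j xs = b j) (x : Euc n) (j : ℕ) :
    chainK Pj x j - xs = Tchain msz A j (x - xs) := by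
  induction j with
  | zero => rfl
  | succ j ih =>
    by_cases h : j < p
    · simp only [chainK, Tchain, h, dite_true, LinearMap.comp_apply,
        (hPj _).eq_add_projSub (hxs _), add_sub_cancel_left, ih]
    · simpa only [chainK, Tchain, h, dite_false] using ih

theorem norm_Tchain_apply_le (j : ℕ) (v : Euc n) : ‖Tchain msz A j v‖ ≤ ‖v‖ := by
  induction j with
  | zero => rfl
  | succ j ih =>
    by_cases h : j < p
    · simp only [Tchain, h, dite_true, LinearMap.comp_apply, projSub_apply]
      exact (Submodule.norm_starProjection_apply_le _ _).trans ih
    · simpa only [Tchain, h, dite_false] using ih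

theorem kacz_sub_eq_Tmap (hPj : ∀ j, IsNearestPointMap {z : Euc n | A j z = b j} (Pj j))
    (hxs : ∀ j, A j xs = b j) (x : Euc n) : kacz Pj x - xs = Tmap msz A (x - xs) :=
  chainK_sub_eq_Tchain hPj hxs x p

theorem norm_kacz_sub_le (hPj : ∀ j, IsNearestPointMap {z : Euc n | A j z = b j} (Pj j))
    (hxs : ∀ j, A j xs = b j) (x : Euc n) : ‖kacz Pj x - xs‖ ≤ ‖x - xs‖ := by
  rw [kacz_sub_eq_Tmap hPj hxs]
  exact norm_Tchain_apply_le p _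

/-- `P x = T x + g`, rewritten around `x0` with `C = I - T` and `r = g - C x0`. -/
theorem kacz_sub_eq (hPj : ∀ j, IsNearestPointMap {z : Euc n | A j z = b j} (Pj j))
    (hxs : ∀ j, A j xs = b j) (x0 x : Euc n) :
    kacz Pj x - x0 = (x - x0) - Cmap msz A (x - x0) + (kacz Pj 0 - Cmap msz A x0) := by
  rw [sub_eq_iff_eq_add.1 (kacz_sub_eq_Tmap hPj hxs x),
    sub_eq_iff_eq_add.1 (kacz_sub_eq_Tmap hPj hxs 0)]
  simp only [Cmap, LinearMap.sub_apply, LinearMap.id_apply, map_sub, map_zero]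
  abel

end Kaczmarz

section Krylov

variable {n : ℕ} (C : Euc n →ₗ[ℝ] Euc n) (r : Euc n)

theorem krylov_zero : krylov C r 0 = ⊥ := by
  simp [krylov]

theorem krylov_mono : Monotone (krylov C r) :=
  fun _ _ hkl => Submodule.span_mono fun _ ⟨i, hi, hv⟩ => ⟨i, hi.trans_le hkl, hv⟩

theorem self_mem_krylov_succ (k : ℕ) : r ∈ krylov C r (k + 1) :=
  Submodule.subset_span ⟨0, k.succ_pos, rfl⟩

theorem apply_mem_krylov_succ {k : ℕ} {v : Euc n} (hv : v ∈ krylov C r k) :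
    C v ∈ krylov C r (k + 1) := by
  rw [← Submodule.mem_comap]
  refine (Submodule.span_le.2 ?_) hv
  rintro _ ⟨i, hi, rfl⟩
  exact Submodule.subset_span ⟨i + 1, by omega, by rw [pow_succ', Module.End.mul_apply]⟩

theorem finrank_krylov_le (k : ℕ) : finrank ℝ (krylov C r k) ≤ k := by
  have hrange : {v | ∃ i < k, v = (C ^ i) r} = Set.range fun i : Fin k => (C ^ (i : ℕ)) r := by
    ext v
    simp [Fin.exists_iff, eq_comm]
  rw [krylov, hrange]
  simpa [Set.finrank] using finrank_range_le_card (R := ℝ) fun i : Fin k => (C ^ (i : ℕ)) r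

end Krylov

theorem AffineSubspace.eq_and_finrank_direction_eq_of_lt_of_le {k V P : Type*} [DivisionRing k]
    [AddCommGroup V] [Module k V] [AddTorsor V P] {s₁ s₂ s₃ : AffineSubspace k P}
    [FiniteDimensional k s₃.direction] (h₁₂ : s₁ < s₂) (h₂₃ : s₂ ≤ s₃)
    (hs₁ : (s₁ : Set P).Nonempty) (hd : finrank k s₃.direction ≤ finrank k s₁.direction + 1) :
    s₂ = s₃ ∧ finrank k s₂.direction = finrank k s₁.direction + 1 := by
  have hdir : s₂.direction ≤ s₃.direction := AffineSubspace.direction_le h₂₃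
  have : FiniteDimensional k s₂.direction := Submodule.finiteDimensional_of_le hdir
  have hlt := Submodule.finrank_lt_finrank_of_lt (AffineSubspace.direction_lt_of_nonempty h₁₂ hs₁)
  have hmono := Submodule.finrank_mono hdir
  have hdir_eq : s₂.direction = s₃.direction := Submodule.eq_of_le_of_finrank_le hdir (by omega)
  exact ⟨AffineSubspace.eq_of_direction_eq_of_nonempty_of_le hdir_eq (hs₁.mono h₁₂.le) h₂₃,
    by omega⟩

theorem IsUniqueMinimizer.mono {n : ℕ} {xs z : Euc n} {S T : Set (Euc n)}
    (h : IsUniqueMinimizer xs T z) (hST : S ⊆ T) (hz : z ∈ S) : IsUniqueMinimizer xs S z :=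
  ⟨hz, fun y hy => h.2 y (hST hy)⟩

/-- If the minimizer over `T ⊇ S` lay in `S` it would be the minimizer `z` over `S`, which is
impossible once `T` contains another point `w` at least as close as `z`. -/
theorem IsUniqueMinimizer.notMem_of_superset {n : ℕ} {xs z z' w : Euc n} {S T : Set (Euc n)}
    (hS : IsUniqueMinimizer xs S z) (hT : IsUniqueMinimizer xs T z') (hST : S ⊆ T)
    (hw : w ∈ T) (hwz : w ≠ z) (hle : ‖w - xs‖ ≤ ‖z - xs‖) : z' ∉ S := by
  intro hz'
  obtain rfl : z' = z := by
    by_contra hne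
    linarith [hS.2 z' hz' hne, hT.2 z (hST hS.1) (Ne.symm hne)]
  linarith [hT.2 w hw hwz, pow_le_pow_left₀ (norm_nonneg _) hle 2]

theorem image_Iic_succ {α : Type*} (f : ℕ → α) (k : ℕ) :
    f '' Set.Iic (k + 1) = insert (f (k + 1)) (f '' Set.Iic k) := by
  rw [← Order.succ_eq_add_one, Order.Iic_succ, Set.image_insert_eq]

section KrylovIteration

variable {n : ℕ} {C : Euc n →ₗ[ℝ] Euc n} {P : Euc n → Euc n} {x0 r xs : Euc n}

theorem affineSpan_insert_le_mk'_krylov_succ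
    (hP : ∀ x, P x - x0 = (x - x0) - C (x - x0) + r) {s : Set (Euc n)} {k : ℕ}
    (hs : affineSpan ℝ s = AffineSubspace.mk' x0 (krylov C r k)) {x : Euc n}
    (hx : x ∈ affineSpan ℝ s) :
    affineSpan ℝ (insert (P x) s) ≤ AffineSubspace.mk' x0 (krylov C r (k + 1)) := by
  have hle : affineSpan ℝ s ≤ AffineSubspace.mk' x0 (krylov C r (k + 1)) :=
    hs ▸ (AffineSubspace.mk'_le_mk'_iff x0).2 (krylov_mono C r k.le_succ)
  rw [hs, AffineSubspace.mem_mk'] at hx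
  rw [affineSpan_le, Set.insert_subset_iff]
  refine ⟨?_, (subset_affineSpan ℝ s).trans hle⟩
  rw [SetLike.mem_coe, AffineSubspace.mem_mk', vsub_eq_sub, hP]
  exact add_mem (sub_mem (krylov_mono C r k.le_succ hx) (apply_mem_krylov_succ C r hx))
    (self_mem_krylov_succ C r k)

variable {xseq : ℕ → Euc n}

theorem isUniqueMinimizer_and_krylov_zero (h0 : xseq 0 = x0) :
    IsUniqueMinimizer xs (affineSpan ℝ (xseq '' Set.Iic 0)) (xseq 0) ∧
      finrank ℝ (affineSpan ℝ (xseq '' Set.Iic 0)).direction = 0 ∧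
      affineSpan ℝ (xseq '' Set.Iic 0) = AffineSubspace.mk' x0 (krylov C r 0) := by
  have hspan : xseq '' Set.Iic 0 = {x0} := by
    rw [← h0, ← bot_eq_zero, Set.Iic_bot, Set.image_singleton]
  have hdir : (affineSpan ℝ (xseq '' Set.Iic 0)).direction = ⊥ := by
    rw [direction_affineSpan, hspan, vectorSpan_singleton]
  rw [hspan] at hdir ⊢
  refine ⟨⟨mem_affineSpan ℝ h0, fun y hy hne => ?_⟩, by simp [hdir], ?_⟩
  · exact absurd (((AffineSubspace.mem_affineSpan_singleton ℝ _).1 hy).trans h0.symm) hne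
  · rw [krylov_zero, ← hdir, AffineSubspace.mk'_eq (mem_affineSpan ℝ (Set.mem_singleton x0))]

theorem isUniqueMinimizer_and_krylov_succ (hP : ∀ x, P x - x0 = (x - x0) - C (x - x0) + r)
    (hPle : ∀ x, ‖P x - xs‖ ≤ ‖x - xs‖) {k : ℕ}
    (hmin : IsUniqueMinimizer xs (affineSpan ℝ (xseq '' Set.Iic k)) (xseq k))
    (hdim : finrank ℝ (affineSpan ℝ (xseq '' Set.Iic k)).direction = k)
    (hspan : affineSpan ℝ (xseq '' Set.Iic k) = AffineSubspace.mk' x0 (krylov C r k))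
    (hne : P (xseq k) ≠ xseq k)
    (hnext : IsUniqueMinimizer xs
      (affineSpan ℝ (insert (P (xseq k)) (xseq '' Set.Iic k))) (xseq (k + 1))) :
    IsUniqueMinimizer xs (affineSpan ℝ (xseq '' Set.Iic (k + 1))) (xseq (k + 1)) ∧
      finrank ℝ (affineSpan ℝ (xseq '' Set.Iic (k + 1))).direction = k + 1 ∧
      affineSpan ℝ (xseq '' Set.Iic (k + 1)) = AffineSubspace.mk' x0 (krylov C r (k + 1)) := by
  have hxk : xseq k ∈ affineSpan ℝ (xseq '' Set.Iic k) :=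
    mem_affineSpan ℝ (Set.mem_image_of_mem xseq Set.self_mem_Iic)
  have hbig := affineSpan_insert_le_mk'_krylov_succ hP hspan hxk
  have hsub : affineSpan ℝ (xseq '' Set.Iic (k + 1)) ≤
      affineSpan ℝ (insert (P (xseq k)) (xseq '' Set.Iic k)) := by
    rw [image_Iic_succ, affineSpan_le, Set.insert_subset_iff]
    exact ⟨hnext.1, (Set.subset_insert _ _).trans (subset_affineSpan ℝ _)⟩
  have hnotMem : xseq (k + 1) ∉ affineSpan ℝ (xseq '' Set.Iic k) :=
    hmin.notMem_of_superset hnext (affineSpan_mono ℝ (Set.subset_insert _ _))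
      (mem_affineSpan ℝ (Set.mem_insert _ _)) hne (hPle _)
  have hlt : affineSpan ℝ (xseq '' Set.Iic k) < affineSpan ℝ (xseq '' Set.Iic (k + 1)) := by
    refine lt_of_le_of_ne (affineSpan_mono ℝ (Set.image_mono (Set.Iic_subset_Iic.2 k.le_succ)))
      fun h => hnotMem (h ▸ mem_affineSpan ℝ (Set.mem_image_of_mem xseq Set.self_mem_Iic))
  have hfin : finrank ℝ (AffineSubspace.mk' x0 (krylov C r (k + 1))).direction ≤ k + 1 := by
    rw [AffineSubspace.direction_mk']
    exact finrank_krylov_le C r (k + 1)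
  obtain ⟨heq, hdim'⟩ := AffineSubspace.eq_and_finrank_direction_eq_of_lt_of_le hlt
    (hsub.trans hbig) ⟨_, hxk⟩ (hfin.trans_eq (by rw [hdim]))
  exact ⟨hnext.mono hsub (mem_affineSpan ℝ (Set.mem_image_of_mem xseq Set.self_mem_Iic)),
    hdim'.trans (by rw [hdim]), heq⟩

theorem isUniqueMinimizer_and_krylov (hP : ∀ x, P x - x0 = (x - x0) - C (x - x0) + r)
    (hPle : ∀ x, ‖P x - xs‖ ≤ ‖x - xs‖) {K : ℕ} (h0 : xseq 0 = x0)
    (hstep : ∀ k < K, P (xseq k) ≠ xseq k ∧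
      IsUniqueMinimizer xs (affineSpan ℝ (insert (P (xseq k)) (xseq '' Set.Iic k))) (xseq (k + 1)))
    {k : ℕ} (hk : k ≤ K) :
    IsUniqueMinimizer xs (affineSpan ℝ (xseq '' Set.Iic k)) (xseq k) ∧
      finrank ℝ (affineSpan ℝ (xseq '' Set.Iic k)).direction = k ∧
      affineSpan ℝ (xseq '' Set.Iic k) = AffineSubspace.mk' x0 (krylov C r k) := by
  induction k with
  | zero => exact isUniqueMinimizer_and_krylov_zero h0
  | succ k ih =>
    obtain ⟨hmin, hdim, hspan⟩ := ih (Nat.le_of_succ_le hk)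
    obtain ⟨hne, hnext⟩ := hstep k hk
    exact isUniqueMinimizer_and_krylov_succ hP hPle hmin hdim hspan hne hnext

end KrylovIteration

theorem affKrylov_eq_mk' {n : ℕ} (x0 : Euc n) (C : Euc n →ₗ[ℝ] Euc n) (r : Euc n) (k : ℕ) :
    affKrylov x0 C r k = AffineSubspace.mk' x0 (krylov C r k) := by
  ext q
  rw [SetLike.mem_coe, AffineSubspace.mem_mk', affKrylov, vsub_eq_sub]
  constructor
  · rintro ⟨v, hv, rfl⟩
    simpa using hv
  · exact fun hq => ⟨q - x0, hq, add_sub_cancel x0 q⟩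

theorem stmt11_general
    {n p : ℕ} (msz : Fin p → ℕ)
    (A : ∀ j : Fin p, Euc n →ₗ[ℝ] Euc (msz j))
    (b : ∀ j : Fin p, Euc (msz j))
    (Pj : Fin p → Euc n → Euc n)
    (hPj : ∀ j : Fin p, IsNearestPointMap {z : Euc n | A j z = b j} (Pj j))
    (x0 xs : Euc n) (hxs : ∀ j, A j xs = b j)
    (K : ℕ) (xseq : ℕ → Euc n) (h0 : xseq 0 = x0)
    (hstep : ∀ k < K, kacz Pj (xseq k) ≠ xseq k ∧
      IsUniqueMinimizer xs
        (affineSpan ℝ (insert (kacz Pj (xseq k)) (xseq '' Set.Iic k)) : Set (Euc n))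
        (xseq (k + 1))) :
    ∀ k ≤ K,
      IsUniqueMinimizer xs (affineSpan ℝ (xseq '' Set.Iic k) : Set (Euc n)) (xseq k) ∧
      Module.finrank ℝ (affineSpan ℝ (xseq '' Set.Iic k)).direction = k ∧
      (affineSpan ℝ (xseq '' Set.Iic k) : Set (Euc n)) =
        affKrylov x0 (Cmap msz A) (kacz Pj (0 : Euc n) - Cmap msz A x0) k := by
  intro k hk
  obtain ⟨hmin, hdim, hspan⟩ := isUniqueMinimizer_and_krylov (kacz_sub_eq hPj hxs x0)
    (norm_kacz_sub_le hPj hxs) h0 hstep hk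
  exact ⟨hmin, hdim, by rw [hspan, affKrylov_eq_mk']⟩

theorem stmt11
    {n p : ℕ} (msz : Fin p → ℕ)
    (A : ∀ j : Fin p, Euc n →ₗ[ℝ] Euc (msz j))
    (b : ∀ j : Fin p, Euc (msz j))
    (hcons : ∃ z : Euc n, ∀ j, A j z = b j)
    (Pj : Fin p → Euc n → Euc n)
    (hPj : ∀ j : Fin p, IsNearestPointMap {z : Euc n | A j z = b j} (Pj j))
    (x0 xs : Euc n) (hxs : ∀ j, A j xs = b j) (hxs' : xs - x0 ∈ RAT msz A)
    (K : ℕ) (xseq : ℕ → Euc n) (h0 : xseq 0 = x0)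
    (hstep : ∀ k < K, kacz Pj (xseq k) ≠ xseq k ∧
      IsUniqueMinimizer xs
        (affineSpan ℝ (insert (kacz Pj (xseq k)) (xseq '' Set.Iic k)) : Set (Euc n))
        (xseq (k + 1))) :
    ∀ k ≤ K,
      IsUniqueMinimizer xs (affineSpan ℝ (xseq '' Set.Iic k) : Set (Euc n)) (xseq k) ∧
      Module.finrank ℝ (affineSpan ℝ (xseq '' Set.Iic k)).direction = k ∧
      (affineSpan ℝ (xseq '' Set.Iic k) : Set (Euc n)) =
        affKrylov x0 (Cmap msz A) (kacz Pj (0 : Euc n) - Cmap msz A x0) k :=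
  stmt11_general msz A b Pj hPj x0 xs hxs K xseq h0 hstep

end
end
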